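/- arXiv:2109.03943 — 5 statements merged into one kernel-verified Lean document; each statement's English description precedes it below -/
import Mathlib

section
/- If B ~ Binomial(n,p), then E[B^{-1} 1{B>0}] \le 2\min(np, 1/(np)) for all n \ge 1 and p \in [0,1]. -/
open Finset

/-- If `B ~ Binomial(n,p)` then `E[B⁻¹ 1{B>0}] ≤ 2 min(np, 1/(np))`
for all `n ≥ 1` and `p ∈ [0,1]`. -/
theorem binomial_inv_moment_le (n : ℕ) (hn : 1 ≤ n) (p : ℝ) (hp0 : 0 ≤ p) (hp1 : p ≤ 1) :
    ∑ k ∈ Finset.range (n + 1),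
        (n.choose k : ℝ) * p ^ k * (1 - p) ^ (n - k) * (if 0 < k then ((k : ℝ))⁻¹ else 0)
      ≤ 2 * min ((n : ℝ) * p) (1 / ((n : ℝ) * p)) := by
  have hq0 : 0 ≤ 1 - p := by linarith
  have hnp0 : 0 ≤ (n:ℝ) * p := by positivity
  -- pmf sums to 1
  have hpmf : ∀ m : ℕ, ∑ k ∈ range (m+1), (m.choose k : ℝ) * p ^ k * (1-p) ^ (m-k) = 1 := by
    intro m
    have h := add_pow p (1-p) m
    have hpq : p + (1 - p) = 1 := by ring
    rw [hpq, one_pow] at h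
    calc ∑ k ∈ range (m+1), (m.choose k:ℝ) * p^k * (1-p)^(m-k)
        = ∑ k ∈ range (m+1), p^k * (1-p)^(m-k) * (m.choose k:ℝ) :=
          Finset.sum_congr rfl fun k _ => by ring
      _ = 1 := h.symm
  have tn : ∀ m k : ℕ, 0 ≤ (m.choose k : ℝ) * p ^ k * (1-p) ^ (m-k) := by
    intro m k; positivity
  -- Bound 1 : S ≤ 2 * (n*p)
  have hB1 : ∑ k ∈ Finset.range (n + 1),
        (n.choose k : ℝ) * p ^ k * (1 - p) ^ (n - k) * (if 0 < k then ((k : ℝ))⁻¹ else 0)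
      ≤ 2 * ((n:ℝ) * p) := by
    have step : ∑ k ∈ Finset.range (n + 1),
        (n.choose k : ℝ) * p ^ k * (1 - p) ^ (n - k) * (if 0 < k then ((k : ℝ))⁻¹ else 0)
        ≤ 1 - (1-p)^n := by
      have h1 : ∑ k ∈ Finset.range (n + 1),
          (n.choose k : ℝ) * p ^ k * (1 - p) ^ (n - k) * (if 0 < k then ((k : ℝ))⁻¹ else 0)
          ≤ ∑ k ∈ range (n+1), ((n.choose k : ℝ) * p ^ k * (1-p) ^ (n-k)
              - (if k = 0 then (n.choose k : ℝ) * p ^ k * (1-p) ^ (n-k) else 0)) := by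
        apply Finset.sum_le_sum
        intro k _
        rcases Nat.eq_zero_or_pos k with hk | hk
        · simp [hk]
        · have hk' : ¬ k = 0 := Nat.pos_iff_ne_zero.mp hk
          simp only [hk, if_pos, hk', if_neg, sub_zero, if_false]
          have hki : ((k:ℝ))⁻¹ ≤ 1 := by
            rw [inv_le_one_iff₀]; right; exact_mod_cast hk
          exact mul_le_of_le_one_right (tn n k) hki
      refine h1.trans ?_
      rw [Finset.sum_sub_distrib, hpmf n, Finset.sum_ite_eq' (range (n+1)) 0]
      simp
    have bern : 1 - (n:ℝ) * p ≤ (1-p)^n := by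
      have := one_add_mul_le_pow (a := -p) (by linarith) n
      calc 1 - (n:ℝ)*p = 1 + n * (-p) := by ring
        _ ≤ (1 + -p)^n := this
        _ = (1-p)^n := by ring_nf
    nlinarith
  -- Bound 2 : S ≤ 2 * (1/(n*p))
  have hB2 : ∑ k ∈ Finset.range (n + 1),
        (n.choose k : ℝ) * p ^ k * (1 - p) ^ (n - k) * (if 0 < k then ((k : ℝ))⁻¹ else 0)
      ≤ 2 * (1 / ((n:ℝ) * p)) := by
    rcases eq_or_lt_of_le hp0 with hp | hp
    · have hS : ∑ k ∈ Finset.range (n + 1),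
          (n.choose k : ℝ) * p ^ k * (1 - p) ^ (n - k) * (if 0 < k then ((k : ℝ))⁻¹ else 0) = 0 := by
        apply Finset.sum_eq_zero
        intro k _
        rcases Nat.eq_zero_or_pos k with hk | hk
        · simp [hk]
        · rw [← hp]; simp [Nat.pos_iff_ne_zero.mp hk]
      rw [hS, ← hp]
      simp
    · have hn1 : (0:ℝ) < (n:ℝ) + 1 := by positivity
      have hD : (0:ℝ) < ((n:ℝ)+1) * p := by positivity
      have key : ∑ k ∈ Finset.range (n + 1),
          (n.choose k : ℝ) * p ^ k * (1 - p) ^ (n - k) * (if 0 < k then ((k : ℝ))⁻¹ else 0)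
          ≤ ∑ k ∈ range (n+1), (2 / (((n:ℝ)+1) * p)) *
              (((n+1).choose (k+1) : ℝ) * p ^ (k+1) * (1-p) ^ (n-k)) := by
        apply Finset.sum_le_sum
        intro k _
        rcases Nat.eq_zero_or_pos k with hk | hk
        · subst hk
          simp only [lt_self_iff_false, if_false, mul_zero]
          positivity
        · rw [if_pos hk]
          have hkk : (0:ℝ) < k := by exact_mod_cast hk
          have pascal : ((n+1 : ℕ) : ℝ) * (n.choose k : ℝ) = ((n+1).choose (k+1) : ℝ) * ((k+1:ℕ):ℝ) := by
            exact_mod_cast congrArg (Nat.cast (R := ℝ)) (Nat.add_one_mul_choose_eq n k)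
          push_cast at pascal
          have h2k : ((k:ℝ)+1) ≤ 2 * k := by
            have : (1:ℝ) ≤ k := by exact_mod_cast hk
            linarith
          rw [← div_eq_mul_inv, div_mul_eq_mul_div, div_le_div_iff₀ hkk hD]
          have hc : ((n:ℝ)+1) * (n.choose k:ℝ) ≤ 2 * ((n+1).choose (k+1):ℝ) * k := by
            have hC1 : (0:ℝ) ≤ ((n+1).choose (k+1):ℝ) := by positivity
            nlinarith [pascal]
          have hpq2 : (0:ℝ) ≤ p^(k+1) * (1-p)^(n-k) := by positivity
          calc (n.choose k:ℝ) * p^k * (1-p)^(n-k) * (((n:ℝ)+1)*p)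
              = (((n:ℝ)+1)*(n.choose k:ℝ)) * (p^(k+1) * (1-p)^(n-k)) := by ring
            _ ≤ (2 * ((n+1).choose (k+1):ℝ) * k) * (p^(k+1) * (1-p)^(n-k)) :=
                mul_le_mul_of_nonneg_right hc hpq2
            _ = 2 * (((n+1).choose (k+1):ℝ) * p^(k+1) * (1-p)^(n-k)) * k := by ring
      have hT : ∑ k ∈ range (n+1), (((n+1).choose (k+1):ℝ) * p ^ (k+1) * (1-p) ^ (n-k)) ≤ 1 := by
        have h := hpmf (n+1)
        rw [Finset.sum_range_succ'] at h
        simp only [Nat.succ_sub_succ] at h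
        have hz : (0:ℝ) ≤ (1-p)^(n+1) := by positivity
        have h0 : ((n+1).choose 0 : ℝ) * p ^ 0 * (1-p) ^ (n+1-0) = (1-p)^(n+1) := by simp
        rw [h0] at h
        linarith
      calc ∑ k ∈ Finset.range (n + 1),
            (n.choose k : ℝ) * p ^ k * (1 - p) ^ (n - k) * (if 0 < k then ((k : ℝ))⁻¹ else 0)
          ≤ ∑ k ∈ range (n+1), (2 / (((n:ℝ)+1) * p)) *
              (((n+1).choose (k+1) : ℝ) * p ^ (k+1) * (1-p) ^ (n-k)) := key
        _ = (2 / (((n:ℝ)+1) * p)) *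
              ∑ k ∈ range (n+1), (((n+1).choose (k+1) : ℝ) * p ^ (k+1) * (1-p) ^ (n-k)) := by
            rw [Finset.mul_sum]
        _ ≤ (2 / (((n:ℝ)+1) * p)) * 1 := by
            apply mul_le_mul_of_nonneg_left hT
            positivity
        _ ≤ 2 * (1 / ((n:ℝ) * p)) := by
            rw [mul_one, mul_one_div]
            have hnp : (0:ℝ) < (n:ℝ)*p := by
              apply mul_pos _ hp
              exact_mod_cast Nat.lt_of_lt_of_le Nat.zero_lt_one hn
            apply div_le_div_of_nonneg_left (by norm_num) hnp
            nlinarith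
  calc ∑ k ∈ Finset.range (n + 1),
        (n.choose k : ℝ) * p ^ k * (1 - p) ^ (n - k) * (if 0 < k then ((k : ℝ))⁻¹ else 0)
      ≤ min (2 * ((n:ℝ)*p)) (2 * (1/((n:ℝ)*p))) := le_min hB1 hB2
    _ ≤ 2 * min ((n:ℝ)*p) (1/((n:ℝ)*p)) := by
        rcases min_cases ((n:ℝ)*p) (1/((n:ℝ)*p)) with ⟨h, _⟩ | ⟨h, _⟩ <;> rw [h] <;>
          [exact min_le_left _ _; exact min_le_right _ _]
end

section
/- If B ~ Binomial(n,p), then E[(B+1)^{-1} 1{B>0}] \le \min(np, 1/(np)) for all n \ge 1 and p \in [0,1]. -/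
open Finset

lemma binom_sum_one' (n : ℕ) (p : ℝ) :
    ∑ k ∈ Finset.range (n + 1), (n.choose k : ℝ) * p ^ k * (1 - p) ^ (n - k) = 1 := by
  have h := add_pow p (1 - p) n
  have h1 : p + (1 - p) = (1 : ℝ) := by ring
  rw [h1, one_pow] at h
  calc ∑ k ∈ Finset.range (n + 1), (n.choose k : ℝ) * p ^ k * (1 - p) ^ (n - k)
      = ∑ k ∈ Finset.range (n + 1), p ^ k * (1 - p) ^ (n - k) * (n.choose k : ℝ) := by
        apply Finset.sum_congr rfl; intros; ring
    _ = 1 := h.symm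

/-- If `B ~ Binomial(n,p)` then `E[(B+1)⁻¹ 1{B>0}] ≤ min(np, 1/(np))`
for all `n ≥ 1` and `p ∈ [0,1]`. -/
theorem binomial_inv_succ_moment_le (n : ℕ) (hn : 1 ≤ n) (p : ℝ) (hp0 : 0 ≤ p) (hp1 : p ≤ 1) :
    ∑ k ∈ Finset.range (n + 1),
        (n.choose k : ℝ) * p ^ k * (1 - p) ^ (n - k) * (if 0 < k then ((k : ℝ) + 1)⁻¹ else 0)
      ≤ min ((n : ℝ) * p) (1 / ((n : ℝ) * p)) := by
  have hq : (0:ℝ) ≤ 1 - p := by linarith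
  rcases eq_or_lt_of_le hp0 with hp | hp
  · -- p = 0
    rw [← hp]
    have hz : ∑ k ∈ Finset.range (n + 1),
        (n.choose k : ℝ) * (0:ℝ) ^ k * (1 - 0) ^ (n - k) * (if 0 < k then ((k : ℝ) + 1)⁻¹ else 0)
        = 0 := by
      apply Finset.sum_eq_zero
      intro k _
      rcases Nat.eq_zero_or_pos k with h0 | h0
      · simp [h0]
      · simp [Nat.pos_iff_ne_zero.mp h0, zero_pow]
    rw [hz]
    simp
  · -- p > 0
    have hn1 : (1:ℝ) ≤ (n:ℝ) := by exact_mod_cast hn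
    have hnp : 0 < (n:ℝ) * p := by positivity
    apply le_min
    · -- bound by n p
      have step1 : ∑ k ∈ Finset.range (n + 1),
          (n.choose k : ℝ) * p ^ k * (1 - p) ^ (n - k) * (if 0 < k then ((k : ℝ) + 1)⁻¹ else 0)
          ≤ ∑ k ∈ Finset.range (n + 1),
            ((n.choose k : ℝ) * p ^ k * (1 - p) ^ (n - k)
              - if k = 0 then (1 - p) ^ n else 0) := by
        apply Finset.sum_le_sum
        intro k _
        rcases Nat.eq_zero_or_pos k with h0 | h0
        · simp [h0]
        · have hk0 : k ≠ 0 := Nat.pos_iff_ne_zero.mp h0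
          rw [if_pos h0, if_neg hk0, sub_zero]
          have hle : ((k : ℝ) + 1)⁻¹ ≤ 1 := by
            rw [inv_le_one_iff₀]
            right
            have : (1:ℝ) ≤ (k:ℝ) := by exact_mod_cast h0
            linarith
          have hterm : (0:ℝ) ≤ (n.choose k : ℝ) * p ^ k * (1 - p) ^ (n - k) := by positivity
          nlinarith
      have step2 : ∑ k ∈ Finset.range (n + 1),
            ((n.choose k : ℝ) * p ^ k * (1 - p) ^ (n - k)
              - if k = 0 then (1 - p) ^ n else 0) = 1 - (1 - p) ^ n := by
        rw [Finset.sum_sub_distrib, binom_sum_one' n p]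
        congr 1
        rw [Finset.sum_ite_eq' (Finset.range (n+1)) 0 (fun _ => (1 - p)^n)]
        simp
      have bern : 1 - (n:ℝ) * p ≤ (1 - p) ^ n := by
        have := one_add_mul_le_pow (a := -p) (by linarith) n
        simpa [← sub_eq_add_neg] using this
      calc _ ≤ 1 - (1 - p) ^ n := step1.trans_eq step2
        _ ≤ (n:ℝ) * p := by linarith
    · -- bound by 1/(np)
      rw [le_div_iff₀ hnp]
      -- show S * (n p) ≤ 1
      have key : ∀ k ∈ Finset.range (n + 1),
          (n.choose k : ℝ) * p ^ k * (1 - p) ^ (n - k) * (if 0 < k then ((k : ℝ) + 1)⁻¹ else 0)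
            * ((n:ℝ) * p)
          ≤ ((n+1).choose (k+1) : ℝ) * p ^ (k+1) * (1 - p) ^ ((n+1) - (k+1)) := by
        intro k hk
        rw [Finset.mem_range] at hk
        have hkn : k ≤ n := Nat.lt_succ_iff.mp hk
        have hsub : (n+1) - (k+1) = n - k := by omega
        rw [hsub]
        rcases Nat.eq_zero_or_pos k with h0 | h0
        · simp [h0]
          positivity
        · rw [if_pos h0]
          have hchoose : ((n+1).choose (k+1) : ℝ) * ((k:ℝ) + 1) = ((n:ℝ)+1) * (n.choose k : ℝ) := by
            have h2 : ((n+1) * n.choose k : ℕ) = ((n+1).choose (k+1) * (k+1) : ℕ) :=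
              Nat.add_one_mul_choose_eq n k
            have h3 : ((n:ℝ)+1) * (n.choose k : ℝ) = ((n+1).choose (k+1) : ℝ) * ((k:ℝ)+1) := by
              exact_mod_cast congrArg (Nat.cast : ℕ → ℝ) h2
            linarith
          have hk1 : (0:ℝ) < (k:ℝ) + 1 := by positivity
          have hcoef : (n:ℝ) * (n.choose k : ℝ) * ((k:ℝ)+1)⁻¹ ≤ ((n+1).choose (k+1) : ℝ) := by
            rw [← div_eq_mul_inv, div_le_iff₀ hk1]
            have hcpos : (0:ℝ) ≤ (n.choose k : ℝ) := by positivity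
            linarith
          have hpos : (0:ℝ) ≤ p ^ k * (1 - p) ^ (n - k) * p := by positivity
          calc (n.choose k : ℝ) * p ^ k * (1 - p) ^ (n - k) * ((k : ℝ) + 1)⁻¹ * ((n:ℝ) * p)
              = ((n:ℝ) * (n.choose k : ℝ) * ((k:ℝ)+1)⁻¹) * (p ^ k * (1 - p) ^ (n - k) * p) := by
                ring
            _ ≤ ((n+1).choose (k+1) : ℝ) * (p ^ k * (1 - p) ^ (n - k) * p) := by
                apply mul_le_mul_of_nonneg_right hcoef hpos
            _ = ((n+1).choose (k+1) : ℝ) * p ^ (k+1) * (1 - p) ^ (n - k) := by ring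
      have step1 : (∑ k ∈ Finset.range (n + 1),
          (n.choose k : ℝ) * p ^ k * (1 - p) ^ (n - k) * (if 0 < k then ((k : ℝ) + 1)⁻¹ else 0))
            * ((n:ℝ) * p)
          ≤ ∑ k ∈ Finset.range (n + 1),
            ((n+1).choose (k+1) : ℝ) * p ^ (k+1) * (1 - p) ^ ((n+1) - (k+1)) := by
        rw [Finset.sum_mul]
        exact Finset.sum_le_sum key
      have step2 : ∑ k ∈ Finset.range (n + 1),
            ((n+1).choose (k+1) : ℝ) * p ^ (k+1) * (1 - p) ^ ((n+1) - (k+1)) ≤ 1 := by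
        have hfull := binom_sum_one' (n+1) p
        rw [Finset.sum_range_succ' (fun j => ((n+1).choose j : ℝ) * p ^ j * (1 - p) ^ ((n+1) - j)) (n+1)] at hfull
        have h0 : (0:ℝ) ≤ ((n+1).choose 0 : ℝ) * p ^ 0 * (1 - p) ^ ((n+1) - 0) := by positivity
        linarith
      exact step1.trans step2
end

section
/- Suppose the mixing distribution G on [0,\infty) satisfies G((x,\infty)) \le a e^{-bx} for all x > 0, where a, b > 0. Then the Poisson mixture f(y) = \int_0^\infty e^{-x} x^y/y!\, dG(x) satisfies f(y) \le a (1+b)^{-y} for every integer y \ge 1. -/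
open MeasureTheory Real

-- FTC step: e^{-x} x^{n+1} ≤ (n+1) ∫_0^x t^n e^{-t} dt for x ≥ 0
lemma aux_ftc (n : ℕ) {x : ℝ} (hx : 0 ≤ x) :
    Real.exp (-x) * x ^ (n + 1) ≤
      (n + 1 : ℝ) * ∫ t in (0:ℝ)..x, t ^ n * Real.exp (-t) := by
  set F : ℝ → ℝ := fun t => t ^ (n + 1) * Real.exp (-t) with hF
  have hderiv : ∀ t ∈ Set.uIcc (0:ℝ) x, HasDerivAt F
      (((n + 1 : ℝ) * t ^ n - t ^ (n + 1)) * Real.exp (-t)) t := by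
    intro t _
    have h1 : HasDerivAt (fun t : ℝ => t ^ (n + 1)) ((n + 1 : ℝ) * t ^ n) t := by
      simpa using (hasDerivAt_pow (n + 1) t)
    have h2 : HasDerivAt (fun t : ℝ => Real.exp (-t)) (-Real.exp (-t)) t := by
      simpa using ((hasDerivAt_neg t).exp)
    have := h1.fun_mul h2
    refine this.congr_deriv ?_
    ring
  have hcont : Continuous fun t : ℝ => ((n + 1 : ℝ) * t ^ n - t ^ (n + 1)) * Real.exp (-t) := by
    continuity
  have hFTC := intervalIntegral.integral_eq_sub_of_hasDerivAt hderiv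
    (hcont.intervalIntegrable 0 x)
  have hF0 : F 0 = 0 := by simp [hF]
  have hmono : (∫ t in (0:ℝ)..x, ((n + 1 : ℝ) * t ^ n - t ^ (n + 1)) * Real.exp (-t))
      ≤ ∫ t in (0:ℝ)..x, (n + 1 : ℝ) * (t ^ n * Real.exp (-t)) := by
    apply intervalIntegral.integral_mono_on hx (hcont.intervalIntegrable 0 x)
      ((by continuity : Continuous fun t : ℝ => (n + 1 : ℝ) * (t ^ n * Real.exp (-t))).intervalIntegrable 0 x)
    intro t ht
    have h1 : 0 ≤ t ^ (n + 1) * Real.exp (-t) :=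
      mul_nonneg (pow_nonneg ht.1 (n+1)) (Real.exp_pos (-t)).le
    nlinarith [h1]
  calc Real.exp (-x) * x ^ (n + 1) = F x - F 0 := by rw [hF0, sub_zero, hF]; ring
    _ = ∫ t in (0:ℝ)..x, ((n + 1 : ℝ) * t ^ n - t ^ (n + 1)) * Real.exp (-t) := hFTC.symm
    _ ≤ ∫ t in (0:ℝ)..x, (n + 1 : ℝ) * (t ^ n * Real.exp (-t)) := hmono
    _ = (n + 1 : ℝ) * ∫ t in (0:ℝ)..x, t ^ n * Real.exp (-t) := by
        rw [intervalIntegral.integral_const_mul]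

lemma aux_integrable (n : ℕ) {c : ℝ} (hc : 0 < c) :
    MeasureTheory.IntegrableOn (fun t : ℝ => t ^ n * Real.exp (-(c * t))) (Set.Ioi 0) := by
  have := integrableOn_rpow_mul_exp_neg_mul_rpow (p := 1) (s := (n : ℝ)) (b := c)
    (neg_one_lt_zero.trans_le (Nat.cast_nonneg n)) one_pos hc
  refine this.congr_fun (fun t ht => ?_) measurableSet_Ioi
  beta_reduce
  rw [Real.rpow_one, Real.rpow_natCast]
  ring_nf

lemma aux_gamma (n : ℕ) {c : ℝ} (hc : 0 < c) :
    ∫ t in Set.Ioi (0:ℝ), t ^ n * Real.exp (-(c * t)) = (n.factorial : ℝ) / c ^ (n + 1) := by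
  have h := Real.integral_rpow_mul_exp_neg_mul_Ioi (a := (n + 1 : ℝ)) (r := c)
    (by positivity) hc
  have hcongr : ∫ t in Set.Ioi (0:ℝ), t ^ ((n + 1 : ℝ) - 1) * Real.exp (-(c * t))
      = ∫ t in Set.Ioi (0:ℝ), t ^ n * Real.exp (-(c * t)) := by
    refine MeasureTheory.setIntegral_congr_fun measurableSet_Ioi (fun t ht => ?_)
    rw [show (n + 1 : ℝ) - 1 = (n : ℝ) by ring, Real.rpow_natCast]
  rw [hcongr] at h
  rw [h, show ((n:ℝ) + 1) = ((n + 1 : ℕ) : ℝ) by push_cast; ring,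
    Real.rpow_natCast, Nat.cast_add, Nat.cast_one, Real.Gamma_nat_eq_factorial]
  rw [div_pow, one_pow]
  ring

lemma aux_key (n : ℕ) (G : Measure ℝ) [IsProbabilityMeasure G] (a b : ℝ) (ha : 0 < a) (hb : 0 < b)
    (hsupp : ∀ᵐ x ∂G, 0 ≤ x)
    (htail : ∀ x : ℝ, 0 < x → (G (Set.Ioi x)).toReal ≤ a * Real.exp (-b * x)) :
    ∫ x, (∫ t in (0:ℝ)..x, t ^ n * Real.exp (-t)) ∂G
      ≤ a * (n.factorial : ℝ) / (1 + b) ^ (n + 1) := by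
  set g : ℝ → ℝ := fun t => t ^ n * Real.exp (-t) with hgdef
  have hg_cont : Continuous g := by continuity
  set H : ℝ → ℝ := fun x => ∫ t in (0:ℝ)..x, g t with hHdef
  have hH_cont : Continuous H :=
    intervalIntegral.continuous_primitive (fun a b => hg_cont.intervalIntegrable a b) 0
  have hg_nn : ∀ t : ℝ, 0 ≤ t → 0 ≤ g t := fun t ht =>
    mul_nonneg (pow_nonneg ht n) (Real.exp_pos _).le
  have hH_nn : ∀ᵐ x ∂G, 0 ≤ H x := by
    filter_upwards [hsupp] with x hx
    exact intervalIntegral.integral_nonneg hx (fun t ht => hg_nn t ht.1)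
  -- step 1: real integral to lintegral
  rw [MeasureTheory.integral_eq_lintegral_of_nonneg_ae hH_nn hH_cont.aestronglyMeasurable]
  -- step 2: rewrite inner as lintegral of indicator
  set f : ℝ → ℝ → ENNReal := fun x t =>
    Set.indicator (Set.Ioo 0 x) (fun t => ENNReal.ofReal (g t)) t with hfdef
  have step2 : ∫⁻ x, ENNReal.ofReal (H x) ∂G = ∫⁻ x, (∫⁻ t, f x t) ∂G := by
    refine MeasureTheory.lintegral_congr_ae ?_
    filter_upwards [hsupp] with x hx
    have h1 : H x = ∫ t in Set.Ioo 0 x, g t := by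
      show (∫ t in (0:ℝ)..x, g t) = _
      rw [intervalIntegral.integral_of_le hx, MeasureTheory.integral_Ioc_eq_integral_Ioo]
    have hint : MeasureTheory.IntegrableOn g (Set.Ioo 0 x) := by
      have h2 : IntervalIntegrable g MeasureTheory.volume 0 x := hg_cont.intervalIntegrable 0 x
      rw [intervalIntegrable_iff_integrableOn_Ioc_of_le hx] at h2
      exact h2.mono_set Set.Ioo_subset_Ioc_self
    have hnn : 0 ≤ᵐ[MeasureTheory.volume.restrict (Set.Ioo 0 x)] g :=
      MeasureTheory.ae_restrict_of_forall_mem measurableSet_Ioo (fun t ht => hg_nn t ht.1.le)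
    rw [h1, MeasureTheory.ofReal_integral_eq_lintegral_ofReal hint hnn,
      ← MeasureTheory.lintegral_indicator measurableSet_Ioo _]
  rw [step2]
  -- step 3: swap
  have hmeas : Measurable (Function.uncurry f) := by
    have : Function.uncurry f =
        Set.indicator {p : ℝ × ℝ | 0 < p.2 ∧ p.2 < p.1} (fun p => ENNReal.ofReal (g p.2)) := by
      funext p
      simp only [Function.uncurry, hfdef, Set.indicator, Set.mem_Ioo, Set.mem_setOf_eq]
    rw [this]
    refine Measurable.indicator ?_ ?_
    · exact ENNReal.measurable_ofReal.comp (hg_cont.measurable.comp measurable_snd)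
    · exact MeasurableSet.inter (measurableSet_lt measurable_const measurable_snd)
        (measurableSet_lt measurable_snd measurable_fst)
  have step3 : ∫⁻ x, (∫⁻ t, f x t) ∂G = ∫⁻ t, (∫⁻ x, f x t ∂G) := by
    exact MeasureTheory.lintegral_lintegral_swap hmeas.aemeasurable
  rw [step3]
  -- step 4: compute inner integral
  have step4 : ∀ t : ℝ, (∫⁻ x, f x t ∂G) =
      Set.indicator (Set.Ioi 0) (fun t => ENNReal.ofReal (g t) * G (Set.Ioi t)) t := by
    intro t
    by_cases ht : 0 < t
    · have : ∀ x : ℝ, f x t = Set.indicator (Set.Ioi t) (fun _ => ENNReal.ofReal (g t)) x := by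
        intro x
        simp only [hfdef, Set.indicator, Set.mem_Ioo, Set.mem_Ioi, ht, true_and]
      simp only [this]
      rw [MeasureTheory.lintegral_indicator measurableSet_Ioi _,
        MeasureTheory.setLIntegral_const, Set.indicator_of_mem (Set.mem_Ioi.mpr ht)]
    · have : ∀ x : ℝ, f x t = 0 := by
        intro x
        simp only [hfdef, Set.indicator, Set.mem_Ioo]
        simp [ht]
      simp only [this]
      rw [MeasureTheory.lintegral_zero, Set.indicator_of_notMem (by simpa using ht)]
  simp only [step4]
  rw [MeasureTheory.lintegral_indicator measurableSet_Ioi _]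
  -- step 5: tail bound
  have step5 : ∫⁻ t in Set.Ioi 0, ENNReal.ofReal (g t) * G (Set.Ioi t)
      ≤ ∫⁻ t in Set.Ioi 0, ENNReal.ofReal (a * (t ^ n * Real.exp (-((1 + b) * t)))) := by
    refine MeasureTheory.lintegral_mono_ae ?_
    refine MeasureTheory.ae_restrict_of_forall_mem measurableSet_Ioi (fun t ht => ?_)
    have ht' : 0 < t := ht
    have h1 : G (Set.Ioi t) ≤ ENNReal.ofReal (a * Real.exp (-b * t)) := by
      rw [← ENNReal.ofReal_toReal (MeasureTheory.measure_ne_top G _)]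
      exact ENNReal.ofReal_le_ofReal (htail t ht')
    calc ENNReal.ofReal (g t) * G (Set.Ioi t)
        ≤ ENNReal.ofReal (g t) * ENNReal.ofReal (a * Real.exp (-b * t)) := by
          exact mul_le_mul_right h1 _
      _ = ENNReal.ofReal (a * (t ^ n * Real.exp (-((1 + b) * t)))) := by
          rw [← ENNReal.ofReal_mul (hg_nn t ht'.le)]
          congr 1
          rw [hgdef]
          simp only []
          rw [show -((1 + b) * t) = -t + -b * t by ring, Real.exp_add]
          ring
  have hint2 : MeasureTheory.IntegrableOn
      (fun t : ℝ => a * (t ^ n * Real.exp (-((1 + b) * t)))) (Set.Ioi 0) :=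
    (aux_integrable n (by linarith : (0:ℝ) < 1 + b)).const_mul a
  have hnn2 : 0 ≤ᵐ[MeasureTheory.volume.restrict (Set.Ioi 0)]
      fun t : ℝ => a * (t ^ n * Real.exp (-((1 + b) * t))) :=
    MeasureTheory.ae_restrict_of_forall_mem measurableSet_Ioi
      (fun t ht => by have : (0:ℝ) < t := ht; positivity)
  have step6 : ∫⁻ t in Set.Ioi 0, ENNReal.ofReal (a * (t ^ n * Real.exp (-((1 + b) * t))))
      = ENNReal.ofReal (a * ((n.factorial : ℝ) / (1 + b) ^ (n + 1))) := by
    rw [← MeasureTheory.ofReal_integral_eq_lintegral_ofReal hint2 hnn2,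
      integral_const_mul, aux_gamma n (by linarith : (0:ℝ) < 1 + b)]
  have hle := le_trans step5 (le_of_eq step6)
  calc (∫⁻ t in Set.Ioi 0, ENNReal.ofReal (g t) * G (Set.Ioi t)).toReal
      ≤ (ENNReal.ofReal (a * ((n.factorial : ℝ) / (1 + b) ^ (n + 1)))).toReal :=
        ENNReal.toReal_mono ENNReal.ofReal_ne_top hle
    _ = a * ((n.factorial : ℝ) / (1 + b) ^ (n + 1)) := ENNReal.toReal_ofReal (by positivity)
    _ = a * (n.factorial : ℝ) / (1 + b) ^ (n + 1) := by ring

/-- If the mixing distribution `G` on `[0,∞)` has subexponential tail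
`G((x,∞)) ≤ a e^{-bx}` for all `x > 0` (with `a, b > 0`), then the Poisson mixture
`f(y) = ∫ e^{-x} x^y / y! dG(x)` satisfies `f(y) ≤ a (1+b)^{-y}` for every integer `y ≥ 1`. -/
theorem poisson_mixture_subexp_le (a b : ℝ) (ha : 0 < a) (hb : 0 < b)
    (G : Measure ℝ) [IsProbabilityMeasure G] (hsupp : ∀ᵐ x ∂G, 0 ≤ x)
    (htail : ∀ x : ℝ, 0 < x → (G (Set.Ioi x)).toReal ≤ a * Real.exp (-b * x))
    (y : ℕ) (hy : 1 ≤ y) :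
    (∫ x, Real.exp (-x) * x ^ y / (Nat.factorial y : ℝ) ∂G) ≤ a / (1 + b) ^ y := by
  obtain ⟨n, rfl⟩ : ∃ n, y = n + 1 := ⟨y - 1, (Nat.succ_pred_eq_of_pos hy).symm⟩
  set g : ℝ → ℝ := fun t => t ^ n * Real.exp (-t) with hgdef
  have hg_cont : Continuous g := by continuity
  set H : ℝ → ℝ := fun x => ∫ t in (0:ℝ)..x, g t with hHdef
  have hH_cont : Continuous H :=
    intervalIntegral.continuous_primitive (fun a b => hg_cont.intervalIntegrable a b) 0
  have hnf : (0:ℝ) < (Nat.factorial n : ℝ) := by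
    exact_mod_cast Nat.factorial_pos n
  have hnf1 : (0:ℝ) < (Nat.factorial (n + 1) : ℝ) := by
    exact_mod_cast Nat.factorial_pos (n + 1)
  -- integrability of g on Ioi 0, and its integral
  have hgint : MeasureTheory.IntegrableOn g (Set.Ioi 0) := by
    refine (aux_integrable n one_pos).congr_fun (fun t ht => ?_) measurableSet_Ioi
    simp [hgdef]
  have hgval : ∫ t in Set.Ioi (0:ℝ), g t = (Nat.factorial n : ℝ) := by
    have h1 : ∫ t in Set.Ioi (0:ℝ), g t = ∫ t in Set.Ioi (0:ℝ), t ^ n * Real.exp (-(1 * t)) :=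
      MeasureTheory.setIntegral_congr_fun measurableSet_Ioi (fun t ht => by simp [hgdef])
    rw [h1, aux_gamma n one_pos, one_pow, div_one]
  -- a.e. pointwise bound
  have key : ∀ᵐ x ∂G, Real.exp (-x) * x ^ (n + 1) / (Nat.factorial (n + 1) : ℝ)
      ≤ H x / (Nat.factorial n : ℝ) := by
    filter_upwards [hsupp] with x hx
    have h2 : Real.exp (-x) * x ^ (n + 1) ≤ (n + 1 : ℝ) * H x := aux_ftc n hx
    rw [Nat.factorial_succ]
    push_cast
    rw [div_le_div_iff₀ (by positivity) hnf]
    nlinarith [mul_le_mul_of_nonneg_right h2 hnf.le]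
  -- integrability of both sides
  have hint1 : MeasureTheory.Integrable
      (fun x => Real.exp (-x) * x ^ (n + 1) / (Nat.factorial (n + 1) : ℝ)) G := by
    refine MeasureTheory.Integrable.mono' (MeasureTheory.integrable_const 1)
      ((by continuity : Continuous fun x : ℝ =>
        Real.exp (-x) * x ^ (n + 1) / (Nat.factorial (n + 1) : ℝ)).aestronglyMeasurable) ?_
    filter_upwards [hsupp] with x hx
    rw [Real.norm_eq_abs, abs_of_nonneg (by positivity)]
    have h3 : x ^ (n + 1) / (Nat.factorial (n + 1) : ℝ) ≤ Real.exp x :=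
      Real.pow_div_factorial_le_exp x hx (n + 1)
    calc Real.exp (-x) * x ^ (n + 1) / (Nat.factorial (n + 1) : ℝ)
        = Real.exp (-x) * (x ^ (n + 1) / (Nat.factorial (n + 1) : ℝ)) := by ring
      _ ≤ Real.exp (-x) * Real.exp x := by
          exact mul_le_mul_of_nonneg_left h3 (Real.exp_pos _).le
      _ = 1 := by rw [← Real.exp_add]; simp
  have hHbound : ∀ x : ℝ, 0 ≤ x → H x ≤ (Nat.factorial n : ℝ) := by
    intro x hx
    have h1 : H x = ∫ t in Set.Ioc 0 x, g t := intervalIntegral.integral_of_le hx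
    rw [h1, ← hgval]
    refine MeasureTheory.setIntegral_mono_set hgint ?_ ?_
    · exact MeasureTheory.ae_restrict_of_forall_mem measurableSet_Ioi
        (fun t ht => mul_nonneg (pow_nonneg (le_of_lt ht) n) (Real.exp_pos _).le)
    · exact Filter.Eventually.of_forall Set.Ioc_subset_Ioi_self
  have hH_nn : ∀ x : ℝ, 0 ≤ x → 0 ≤ H x := fun x hx =>
    intervalIntegral.integral_nonneg hx
      (fun t ht => mul_nonneg (pow_nonneg ht.1 n) (Real.exp_pos _).le)
  have hint2 : MeasureTheory.Integrable (fun x => H x / (Nat.factorial n : ℝ)) G := by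
    refine MeasureTheory.Integrable.mono' (MeasureTheory.integrable_const 1)
      ((hH_cont.div_const _).aestronglyMeasurable) ?_
    filter_upwards [hsupp] with x hx
    rw [Real.norm_eq_abs, abs_of_nonneg (div_nonneg (hH_nn x hx) hnf.le)]
    rw [div_le_one hnf]
    exact hHbound x hx
  -- combine
  calc (∫ x, Real.exp (-x) * x ^ (n + 1) / (Nat.factorial (n + 1) : ℝ) ∂G)
      ≤ ∫ x, H x / (Nat.factorial n : ℝ) ∂G :=
        MeasureTheory.integral_mono_ae hint1 hint2 key
    _ = (∫ x, H x ∂G) / (Nat.factorial n : ℝ) := by rw [MeasureTheory.integral_div]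
    _ ≤ (a * (Nat.factorial n : ℝ) / (1 + b) ^ (n + 1)) / (Nat.factorial n : ℝ) := by
        refine div_le_div_of_nonneg_right ?_ hnf.le
        exact aux_key n G a b ha hb hsupp htail
    _ = a / (1 + b) ^ (n + 1) := by
        field_simp
end

section
/- In the normal location model with Gaussian prior G_0 = N(0,s), the operator K_1 r = K(\theta r) - (K\theta)(K r) satisfies K_1 r(y) = (d/dy) K r(y) for every bounded measurable r, and consequently K_1 r = \eta^2 K(r') for every bounded r with bounded derivative, where \eta^2 = s/(s+1). -/
open scoped ENNReal NNReal
open MeasureTheory ProbabilityTheory Real Filter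


noncomputable def phg (x : ℝ) : ℝ := (Real.sqrt (2 * Real.pi))⁻¹ * Real.exp (-x ^ 2 / 2)

lemma phg_pos (x : ℝ) : 0 < phg x := by
  unfold phg; positivity

lemma phg_cont : Continuous phg := by
  unfold phg; continuity

lemma phg_le_one (x : ℝ) : phg x ≤ 1 := by
  unfold phg
  have h1 : Real.sqrt (2 * Real.pi) ≥ 1 := by
    rw [show (1:ℝ) = Real.sqrt 1 by simp]
    exact Real.sqrt_le_sqrt (by nlinarith [Real.pi_gt_three])
  have h2 : Real.exp (-x ^ 2 / 2) ≤ 1 := by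
    rw [Real.exp_le_one_iff]; nlinarith [sq_nonneg x]
  calc (Real.sqrt (2 * Real.pi))⁻¹ * Real.exp (-x ^ 2 / 2) ≤ 1 * 1 := by
        apply mul_le_mul _ h2 (Real.exp_nonneg _) zero_le_one
        rw [inv_le_one_iff₀]; right; linarith
    _ = 1 := by ring

lemma abs_mul_phg_le_one (x : ℝ) : |x| * phg x ≤ 1 := by
  unfold phg
  have h1 : Real.sqrt (2 * Real.pi) ≥ 1 := by
    rw [show (1:ℝ) = Real.sqrt 1 by simp]
    exact Real.sqrt_le_sqrt (by nlinarith [Real.pi_gt_three])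
  have h2 : |x| * Real.exp (-x ^ 2 / 2) ≤ 1 := by
    have hx : |x| ≤ Real.exp (x ^ 2 / 2) := by
      have := Real.add_one_le_exp (x ^ 2 / 2)
      nlinarith [sq_nonneg (|x| - 1), sq_abs x]
    rw [show (-x^2/2 : ℝ) = -(x^2/2) by ring, Real.exp_neg]
    rw [mul_inv_le_iff₀ (Real.exp_pos _), one_mul]
    exact hx
  calc |x| * ((Real.sqrt (2 * Real.pi))⁻¹ * Real.exp (-x ^ 2 / 2))
      = (Real.sqrt (2 * Real.pi))⁻¹ * (|x| * Real.exp (-x ^ 2 / 2)) := by ring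
    _ ≤ 1 * 1 := by
        apply mul_le_mul _ h2 (by positivity) zero_le_one
        rw [inv_le_one_iff₀]; right; linarith
    _ = 1 := by ring

lemma phg_hasDerivAt (x : ℝ) : HasDerivAt phg (-x * phg x) x := by
  unfold phg
  have h : HasDerivAt (fun u : ℝ => -u ^ 2 / 2) (-x) x := by
    have := (hasDerivAt_pow 2 x).neg.div_const 2
    refine this.congr_deriv ?_; push_cast; ring
  have := (h.exp).const_mul (Real.sqrt (2 * Real.pi))⁻¹
  refine this.congr_deriv ?_; ring

lemma phg_shift_hasDerivAt (θ x : ℝ) :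
    HasDerivAt (fun u => phg (u - θ)) ((θ - x) * phg (x - θ)) x := by
  have := (phg_hasDerivAt (x - θ)).comp x ((hasDerivAt_id x).sub_const θ)
  refine this.congr_deriv ?_; ring

lemma integrable_bdd {μ : Measure ℝ} [IsProbabilityMeasure μ] {g : ℝ → ℝ} {C : ℝ}
    (hm : AEStronglyMeasurable g μ) (hC : ∀ x, |g x| ≤ C) : Integrable g μ :=
  Integrable.mono' (integrable_const C) hm (Eventually.of_forall fun x => by
    simpa using hC x)

lemma deriv_M {μ : Measure ℝ} [IsProbabilityMeasure μ] {g : ℝ → ℝ} {C : ℝ}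
    (hgm : Measurable g) (hC : ∀ x, |g x| ≤ C) (y : ℝ) :
    HasDerivAt (fun x => ∫ θ, g θ * phg (x - θ) ∂μ)
      (∫ θ, g θ * ((θ - y) * phg (y - θ)) ∂μ) y := by
  have hCnn : 0 ≤ C := le_trans (abs_nonneg _) (hC 0)
  have meas : ∀ x : ℝ, AEStronglyMeasurable (fun θ => g θ * phg (x - θ)) μ := by
    intro x
    exact (hgm.mul ((phg_cont.measurable).comp (measurable_const.sub measurable_id))).aestronglyMeasurable
  have meas' : AEStronglyMeasurable (fun θ => g θ * ((θ - y) * phg (y - θ))) μ := by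
    apply Measurable.aestronglyMeasurable
    exact hgm.mul ((measurable_id.sub measurable_const).mul
      ((phg_cont.measurable).comp (measurable_const.sub measurable_id)))
  have key := hasDerivAt_integral_of_dominated_loc_of_deriv_le
    (F := fun x θ => g θ * phg (x - θ))
    (F' := fun x θ => g θ * ((θ - x) * phg (x - θ)))
    (x₀ := y) (bound := fun _ => C) (s := Metric.ball y 1) (Metric.ball_mem_nhds y one_pos)
    (Eventually.of_forall meas)
    (integrable_bdd (meas y) (fun θ => by
      rw [abs_mul, abs_of_pos (phg_pos _)]
      calc |g θ| * phg (y - θ) ≤ C * 1 :=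
        mul_le_mul (hC θ) (phg_le_one _) (le_of_lt (phg_pos _)) hCnn
      _ = C := by ring))
    meas'
    (Eventually.of_forall fun θ => by
      intro x _
      show ‖g θ * ((θ - x) * phg (x - θ))‖ ≤ C
      rw [Real.norm_eq_abs, abs_mul]
      calc |g θ| * |(θ - x) * phg (x - θ)| ≤ C * 1 := by
            apply mul_le_mul (hC θ) _ (abs_nonneg _) hCnn
            rw [abs_mul, abs_of_pos (phg_pos _)]
            rw [show (θ - x) = -(x - θ) by ring, abs_neg]
            exact abs_mul_phg_le_one _
        _ = C := by ring)
    (integrable_const C)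
    (Eventually.of_forall fun θ => by
      intro x _
      exact (phg_shift_hasDerivAt θ x).const_mul (g θ))
  exact key.2


lemma E_hasDerivAt (b m θ : ℝ) :
    HasDerivAt (fun u => Real.exp (-b * (u - m) ^ 2))
      (-(2 * b) * (θ - m) * Real.exp (-b * (θ - m) ^ 2)) θ := by
  have h : HasDerivAt (fun u : ℝ => -b * (u - m) ^ 2) (-(2 * b) * (θ - m)) θ := by
    have := (((hasDerivAt_id θ).sub_const m).pow 2).const_mul (-b)
    refine this.congr_deriv ?_; simp only [id_eq]; push_cast; ring
  have := h.exp
  refine this.congr_deriv ?_; ring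

lemma E_integrable {b : ℝ} (hb : 0 < b) (m : ℝ) :
    Integrable (fun θ => Real.exp (-b * (θ - m) ^ 2)) :=
  (integrable_exp_neg_mul_sq hb).comp_sub_right m

lemma xE_integrable {b : ℝ} (hb : 0 < b) (m : ℝ) :
    Integrable (fun θ => (θ - m) * Real.exp (-b * (θ - m) ^ 2)) :=
  (integrable_mul_exp_neg_mul_sq hb).comp_sub_right m

lemma E_tendsto_atTop {b : ℝ} (hb : 0 < b) (m : ℝ) :
    Tendsto (fun θ => Real.exp (-b * (θ - m) ^ 2)) atTop (nhds 0) := by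
  apply Real.tendsto_exp_atBot.comp
  have h1 : Tendsto (fun θ : ℝ => (θ - m) ^ 2) atTop atTop := by
    have := (tendsto_pow_atTop (two_ne_zero)).comp
      (tendsto_atTop_add_const_right atTop (-m) (tendsto_id (α := ℝ)))
    exact this.congr (fun x => by simp [Function.comp, sub_eq_add_neg])
  have h2 : Tendsto (fun x : ℝ => -b * x) atTop atBot := by
    have h3 : Tendsto (fun x : ℝ => b * x) atTop atTop :=
      (tendsto_const_mul_atTop_of_pos hb).mpr tendsto_id
    exact (tendsto_neg_atBot_iff.mpr h3).congr (fun x => by ring)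
  exact (h2.comp h1).congr (fun x => by simp [Function.comp])

lemma E_tendsto_atBot {b : ℝ} (hb : 0 < b) (m : ℝ) :
    Tendsto (fun θ => Real.exp (-b * (θ - m) ^ 2)) atBot (nhds 0) := by
  apply Real.tendsto_exp_atBot.comp
  have h1 : Tendsto (fun θ : ℝ => (θ - m) ^ 2) atBot atTop := by
    have hneg : Tendsto (fun θ : ℝ => m - θ) atBot atTop := by
      have := (tendsto_neg_atBot_atTop : Tendsto (Neg.neg : ℝ → ℝ) atBot atTop)
      exact (tendsto_atTop_add_const_left atBot m this).congr (fun x => by ring)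
    have := (tendsto_pow_atTop (two_ne_zero)).comp hneg
    exact this.congr (fun x => by simp only [Function.comp_apply]; ring)
  have h2 : Tendsto (fun x : ℝ => -b * x) atTop atBot := by
    have h3 : Tendsto (fun x : ℝ => b * x) atTop atTop :=
      (tendsto_const_mul_atTop_of_pos hb).mpr tendsto_id
    exact (tendsto_neg_atBot_iff.mpr h3).congr (fun x => by ring)
  exact (h2.comp h1).congr (fun x => by simp [Function.comp])

/-- Stein / integration by parts for the Gaussian kernel. -/
lemma stein {b : ℝ} (hb : 0 < b) (m : ℝ) (r r' : ℝ → ℝ) {C C' : ℝ}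
    (hC : ∀ x, |r x| ≤ C) (hC' : ∀ x, |r' x| ≤ C')
    (hd : ∀ x, HasDerivAt r (r' x) x) :
    ∫ θ, (θ - m) * r θ * Real.exp (-b * (θ - m) ^ 2)
      = (2 * b)⁻¹ * ∫ θ, r' θ * Real.exp (-b * (θ - m) ^ 2) := by
  set E := fun θ => Real.exp (-b * (θ - m) ^ 2) with hE
  have hEpos : ∀ θ, 0 < E θ := fun θ => Real.exp_pos _
  have hrcont : Continuous r := by
    rw [continuous_iff_continuousAt]; exact fun x => (hd x).continuousAt
  have hr'meas : Measurable r' := by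
    have : r' = deriv r := funext fun x => ((hd x).deriv).symm
    rw [this]; exact measurable_deriv r
  have hCnn : 0 ≤ C := le_trans (abs_nonneg _) (hC 0)
  -- integrability
  have int_rE : Integrable (fun θ => r θ * E θ) := by
    apply Integrable.mono' ((E_integrable hb m).const_mul C)
      ((hrcont.measurable.mul (by fun_prop)).aestronglyMeasurable)
    refine Eventually.of_forall fun θ => ?_
    rw [Real.norm_eq_abs, Pi.mul_apply, abs_mul, abs_of_pos (hEpos θ)]
    exact mul_le_mul_of_nonneg_right (hC θ) (le_of_lt (hEpos θ))
  have int_xrE : Integrable (fun θ => (θ - m) * r θ * E θ) := by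
    apply Integrable.mono' ((xE_integrable hb m).abs.const_mul C)
      (((measurable_id.sub measurable_const).mul hrcont.measurable |>.mul
        (by fun_prop : Measurable E)).aestronglyMeasurable)
    refine Eventually.of_forall fun θ => ?_
    rw [Real.norm_eq_abs]
    calc |(θ - m) * r θ * E θ| = |r θ| * |(θ - m) * E θ| := by
          rw [abs_mul, abs_mul, abs_mul]; ring
      _ ≤ C * |(θ - m) * E θ| := mul_le_mul_of_nonneg_right (hC θ) (abs_nonneg _)
  have int_r'E : Integrable (fun θ => r' θ * E θ) := by
    apply Integrable.mono' ((E_integrable hb m).const_mul C')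
      ((hr'meas.mul (by fun_prop : Measurable E)).aestronglyMeasurable)
    refine Eventually.of_forall fun θ => ?_
    rw [Real.norm_eq_abs, Pi.mul_apply, abs_mul, abs_of_pos (hEpos θ)]
    exact mul_le_mul_of_nonneg_right (hC' θ) (le_of_lt (hEpos θ))
  -- the potential H and its derivative
  set H := fun θ => -(2 * b)⁻¹ * (r θ * E θ) with hH
  set F := fun θ => (θ - m) * r θ * E θ - (2 * b)⁻¹ * (r' θ * E θ) with hF
  have hHd : ∀ θ, HasDerivAt H (F θ) θ := by
    intro θ
    have h1 := ((hd θ).mul (E_hasDerivAt b m θ)).const_mul (-(2 * b)⁻¹)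
    refine h1.congr_deriv ?_
    simp only [hF, hE]
    field_simp
    ring
  have int_F : Integrable F := int_xrE.sub (int_r'E.const_mul _)
  have hHtop : Tendsto H atTop (nhds 0) := by
    refine squeeze_zero_norm (a := fun θ => (2 * b)⁻¹ * C * E θ) ?_ ?_
    · intro θ
      rw [Real.norm_eq_abs, hH]
      calc |(-(2 * b)⁻¹) * (r θ * E θ)| = (2 * b)⁻¹ * (|r θ| * E θ) := by
            rw [abs_mul, abs_mul, abs_neg, abs_of_pos (by positivity : (0:ℝ) < (2*b)⁻¹),
              abs_of_pos (hEpos θ)]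
        _ ≤ (2 * b)⁻¹ * (C * E θ) := by
            apply mul_le_mul_of_nonneg_left _ (by positivity)
            exact mul_le_mul_of_nonneg_right (hC θ) (le_of_lt (hEpos θ))
        _ = (2 * b)⁻¹ * C * E θ := by ring
    · have := (E_tendsto_atTop hb m).const_mul ((2 * b)⁻¹ * C)
      simpa [hE, neg_mul] using this
  have hHbot : Tendsto H atBot (nhds 0) := by
    refine squeeze_zero_norm (a := fun θ => (2 * b)⁻¹ * C * E θ) ?_ ?_
    · intro θ
      rw [Real.norm_eq_abs, hH]
      calc |(-(2 * b)⁻¹) * (r θ * E θ)| = (2 * b)⁻¹ * (|r θ| * E θ) := by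
            rw [abs_mul, abs_mul, abs_neg, abs_of_pos (by positivity : (0:ℝ) < (2*b)⁻¹),
              abs_of_pos (hEpos θ)]
        _ ≤ (2 * b)⁻¹ * (C * E θ) := by
            apply mul_le_mul_of_nonneg_left _ (by positivity)
            exact mul_le_mul_of_nonneg_right (hC θ) (le_of_lt (hEpos θ))
        _ = (2 * b)⁻¹ * C * E θ := by ring
    · have := (E_tendsto_atBot hb m).const_mul ((2 * b)⁻¹ * C)
      simpa [hE, neg_mul] using this
  have hIic : ∫ θ in Set.Iic (0:ℝ), F θ = H 0 - 0 :=
    integral_Iic_of_hasDerivAt_of_tendsto' (fun x _ => hHd x) int_F.integrableOn hHbot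
  have hIoi : ∫ θ in Set.Ioi (0:ℝ), F θ = 0 - H 0 :=
    integral_Ioi_of_hasDerivAt_of_tendsto' (fun x _ => hHd x) int_F.integrableOn hHtop
  have htot : ∫ θ, F θ = 0 := by
    rw [← intervalIntegral.integral_Iic_add_Ioi int_F.integrableOn int_F.integrableOn, hIic, hIoi]; ring
  have := integral_sub int_xrE (int_r'E.const_mul ((2 * b)⁻¹))
  rw [hF] at htot
  rw [htot] at this
  have h2 := MeasureTheory.integral_const_mul (μ := (volume : Measure ℝ)) ((2 * b)⁻¹) (fun θ => r' θ * E θ)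
  rw [h2] at this
  linarith [this]

-- split lemma
lemma split_int {μ : Measure ℝ} [IsProbabilityMeasure μ] {g : ℝ → ℝ} {C : ℝ}
    (hgm : Measurable g) (hC : ∀ x, |g x| ≤ C) (y : ℝ) :
    ∫ θ, g θ * ((θ - y) * phg (y - θ)) ∂μ
      = (∫ θ, θ * g θ * phg (y - θ) ∂μ) - y * ∫ θ, g θ * phg (y - θ) ∂μ := by
  have hCnn : 0 ≤ C := le_trans (abs_nonneg _) (hC 0)
  have hmph : Measurable (fun θ : ℝ => phg (y - θ)) :=
    (phg_cont.measurable).comp (measurable_const.sub measurable_id)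
  have i1 : Integrable (fun θ => θ * g θ * phg (y - θ)) μ := by
    apply integrable_bdd (C := C * (1 + |y|))
      ((measurable_id.mul hgm).mul hmph).aestronglyMeasurable
    intro θ
    have h1 : |θ| * phg (y - θ) ≤ 1 + |y| := by
      have : |θ| ≤ |θ - y| + |y| := by
        calc |θ| = |(θ - y) + y| := by ring_nf
          _ ≤ |θ - y| + |y| := abs_add_le _ _
      calc |θ| * phg (y - θ) ≤ (|θ - y| + |y|) * phg (y - θ) :=
            mul_le_mul_of_nonneg_right this (phg_pos _).le
        _ = |θ - y| * phg (y - θ) + |y| * phg (y - θ) := by ring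
        _ ≤ 1 + |y| * 1 := by
            apply add_le_add
            · rw [show (θ - y) = -(y - θ) by ring, abs_neg]; exact abs_mul_phg_le_one _
            · exact mul_le_mul_of_nonneg_left (phg_le_one _) (abs_nonneg _)
        _ = 1 + |y| := by ring
    calc |θ * g θ * phg (y - θ)| = |g θ| * (|θ| * phg (y - θ)) := by
          rw [abs_mul, abs_mul, abs_of_pos (phg_pos _)]; ring
      _ ≤ C * (1 + |y|) := by
          apply mul_le_mul (hC θ) h1 (mul_nonneg (abs_nonneg _) (phg_pos _).le) hCnn
  have i2 : Integrable (fun θ => g θ * phg (y - θ)) μ := by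
    apply integrable_bdd (C := C) (hgm.mul hmph).aestronglyMeasurable
    intro θ
    simp only [Pi.mul_apply]
    rw [abs_mul, abs_of_pos (phg_pos _)]
    calc |g θ| * phg (y - θ) ≤ C * 1 :=
          mul_le_mul (hC θ) (phg_le_one _) (phg_pos _).le hCnn
      _ = C := by ring
  calc ∫ θ, g θ * ((θ - y) * phg (y - θ)) ∂μ
      = ∫ θ, (θ * g θ * phg (y - θ) - y * (g θ * phg (y - θ))) ∂μ := by
        congr 1; funext θ; ring
    _ = (∫ θ, θ * g θ * phg (y - θ) ∂μ) - ∫ θ, y * (g θ * phg (y - θ)) ∂μ :=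
        integral_sub i1 (i2.const_mul y)
    _ = (∫ θ, θ * g θ * phg (y - θ) ∂μ) - y * ∫ θ, g θ * phg (y - θ) ∂μ := by
        rw [MeasureTheory.integral_const_mul]

/-- In the normal location model with Gaussian prior `G₀ = N(0,s)`, with
`K r(y) = E[r(θ) | Y = y]` and `K₁ r = K(θr) - (Kθ)(Kr)`:
(i) `K₁ r(y) = (d/dy) K r(y)` for every bounded measurable `r`, and consequently
(ii) `K₁ r = η² K(r')` for every bounded `r` with bounded derivative, where `η² = s/(s+1)`. -/
theorem K1_eq_deriv_and_K_deriv (s : ℝ≥0) (hs : 0 < s)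
    (φ : ℝ → ℝ) (hφ : ∀ x, φ x = (Real.sqrt (2 * Real.pi))⁻¹ * Real.exp (-x ^ 2 / 2))
    (K : (ℝ → ℝ) → ℝ → ℝ)
    (hK : ∀ g y, K g y = (∫ θ, g θ * φ (y - θ) ∂(gaussianReal 0 s))
        / (∫ θ, φ (y - θ) ∂(gaussianReal 0 s)))
    (K1 : (ℝ → ℝ) → ℝ → ℝ)
    (hK1 : ∀ g y, K1 g y = K (fun θ => θ * g θ) y - K (fun θ => θ) y * K g y) :
    (∀ r : ℝ → ℝ, Measurable r → (∃ C, ∀ x, |r x| ≤ C) →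
        ∀ y, HasDerivAt (K r) (K1 r y) y) ∧
    (∀ r r' : ℝ → ℝ, (∃ C, ∀ x, |r x| ≤ C) → (∃ C, ∀ x, |r' x| ≤ C) →
        (∀ x, HasDerivAt r (r' x) x) →
        ∀ y, K1 r y = ((s : ℝ) / ((s : ℝ) + 1)) * K r' y) := by
  have hφg : φ = phg := funext fun x => hφ x
  subst hφg
  set μ := gaussianReal 0 s with hμ
  have hmph : ∀ y : ℝ, Measurable (fun θ : ℝ => phg (y - θ)) := fun y =>
    (phg_cont.measurable).comp (measurable_const.sub measurable_id)
  have hNpos : ∀ y : ℝ, 0 < ∫ θ, phg (y - θ) ∂μ := by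
    intro y
    have hint : Integrable (fun θ => phg (y - θ)) μ := by
      apply integrable_bdd (C := 1) (hmph y).aestronglyMeasurable
      intro θ; rw [abs_of_pos (phg_pos _)]; exact phg_le_one _
    rw [integral_pos_iff_support_of_nonneg (fun θ => (phg_pos _).le) hint]
    have : Function.support (fun θ : ℝ => phg (y - θ)) = Set.univ := by
      ext θ; simp [Function.mem_support, (phg_pos (y - θ)).ne']
    rw [this]
    simp
  constructor
  · intro r hrm hrb y
    obtain ⟨C, hC⟩ := hrb
    have hKr : K r = fun x => (∫ θ, r θ * phg (x - θ) ∂μ) / (∫ θ, phg (x - θ) ∂μ) :=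
      funext fun x => hK r x
    have hd1 : HasDerivAt (fun x => ∫ θ, r θ * phg (x - θ) ∂μ)
        (∫ θ, r θ * ((θ - y) * phg (y - θ)) ∂μ) y := deriv_M hrm hC y
    have hd2 : HasDerivAt (fun x => ∫ θ, phg (x - θ) ∂μ)
        (∫ θ, (θ - y) * phg (y - θ) ∂μ) y := by
      have := deriv_M (μ := μ) (g := fun _ => (1:ℝ)) (C := 1)
        measurable_const (fun x => by norm_num) y
      simpa using this
    rw [hKr]
    have hdiv := hd1.div hd2 (hNpos y).ne'
    refine hdiv.congr_deriv ?_
    have hsplit1 := split_int (μ := μ) hrm hC y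
    have hsplit2 : ∫ θ, (θ - y) * phg (y - θ) ∂μ
        = (∫ θ, θ * phg (y - θ) ∂μ) - y * ∫ θ, phg (y - θ) ∂μ := by
      have := split_int (μ := μ) (g := fun _ => (1:ℝ)) (C := 1)
        measurable_const (fun x => by norm_num) y
      simpa using this
    simp only [hK1, hK]
    rw [hsplit1, hsplit2]
    have hN := (hNpos y).ne'
    field_simp
    ring
  · intro r r' hrb hr'b hd y
    obtain ⟨C, hC⟩ := hrb
    obtain ⟨C', hC'⟩ := hr'b
    have hrm : Measurable r := by
      have : Continuous r := by
        rw [continuous_iff_continuousAt]; exact fun x => (hd x).continuousAt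
      exact this.measurable
    have hr'm : Measurable r' := by
      have : r' = deriv r := funext fun x => ((hd x).deriv).symm
      rw [this]; exact measurable_deriv r
    have hs0 : (0:ℝ) < (s:ℝ) := by exact_mod_cast hs
    have hs1 : (0:ℝ) < (s:ℝ) + 1 := by linarith
    set t : ℝ := (s:ℝ) / ((s:ℝ) + 1) with hts
    have ht : 0 < t := div_pos hs0 hs1
    set b : ℝ := 1 / (2 * t) with hbs
    have hb : 0 < b := by positivity
    set m : ℝ := t * y with hms
    set E : ℝ → ℝ := fun θ => Real.exp (-b * (θ - m) ^ 2) with hEs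
    have hEpos : ∀ θ, 0 < E θ := fun θ => Real.exp_pos _
    set c : ℝ := (Real.sqrt (2 * Real.pi))⁻¹ * (Real.sqrt (2 * Real.pi * (s:ℝ)))⁻¹
      * Real.exp (b * m ^ 2 - y ^ 2 / 2) with hcs
    have hcpos : 0 < c := by positivity
    -- conversion from the gaussian measure to Lebesgue with kernel E
    have hconv : ∀ g : ℝ → ℝ, ∫ θ, g θ * phg (y - θ) ∂μ = c * ∫ θ, g θ * E θ := by
      intro g
      rw [hμ, gaussianReal_of_var_ne_zero 0 hs.ne']
      have hpdf : gaussianPDF 0 s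
          = fun x => ((Real.toNNReal (gaussianPDFReal 0 s x) : ℝ≥0) : ℝ≥0∞) := rfl
      rw [hpdf, integral_withDensity_eq_integral_smul
        ((measurable_gaussianPDFReal 0 s).real_toNNReal)]
      rw [← MeasureTheory.integral_const_mul c]
      congr 1; funext θ
      rw [NNReal.smul_def, Real.coe_toNNReal _ (gaussianPDFReal_nonneg 0 s θ)]
      have hexp : -(θ - 0) ^ 2 / (2 * (s:ℝ)) + (-(y - θ) ^ 2 / 2)
          = (b * m ^ 2 - y ^ 2 / 2) + (-b * (θ - m) ^ 2) := by
        rw [hbs, hms, hts]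
        field_simp
        ring
      have key : gaussianPDFReal 0 s θ * phg (y - θ) = c * E θ := by
        rw [gaussianPDFReal]
        unfold phg
        rw [hcs, hEs]
        calc (Real.sqrt (2 * Real.pi * (s:ℝ)))⁻¹ * Real.exp (-(θ - 0) ^ 2 / (2 * (s:ℝ)))
              * ((Real.sqrt (2 * Real.pi))⁻¹ * Real.exp (-(y - θ) ^ 2 / 2))
            = (Real.sqrt (2 * Real.pi * (s:ℝ)))⁻¹ * (Real.sqrt (2 * Real.pi))⁻¹
              * Real.exp (-(θ - 0) ^ 2 / (2 * (s:ℝ)) + (-(y - θ) ^ 2 / 2)) := by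
              rw [Real.exp_add]; ring
          _ = (Real.sqrt (2 * Real.pi * (s:ℝ)))⁻¹ * (Real.sqrt (2 * Real.pi))⁻¹
              * Real.exp ((b * m ^ 2 - y ^ 2 / 2) + (-b * (θ - m) ^ 2)) := by
              rw [hexp]
          _ = (Real.sqrt (2 * Real.pi))⁻¹ * (Real.sqrt (2 * Real.pi * (s:ℝ)))⁻¹
              * Real.exp (b * m ^ 2 - y ^ 2 / 2) * Real.exp (-b * (θ - m) ^ 2) := by
              rw [Real.exp_add]; ring
      calc gaussianPDFReal 0 s θ • (g θ * phg (y - θ))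
          = g θ * (gaussianPDFReal 0 s θ * phg (y - θ)) := by
            rw [smul_eq_mul]; ring
        _ = g θ * (c * E θ) := by rw [key]
        _ = c * (g θ * E θ) := by ring
    have hden : ∫ θ, phg (y - θ) ∂μ = c * ∫ θ, E θ := by
      have := hconv (fun _ => (1:ℝ))
      simpa using this
    -- integrability over Lebesgue
    have iE := E_integrable hb m
    have ixE := xE_integrable hb m
    have irE : Integrable (fun θ => r θ * E θ) := by
      apply Integrable.mono' (iE.const_mul C)
        ((hrm.mul (by fun_prop : Measurable E)).aestronglyMeasurable)
      refine Eventually.of_forall fun θ => ?_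
      rw [Real.norm_eq_abs, Pi.mul_apply, abs_mul, abs_of_pos (hEpos θ)]
      exact mul_le_mul_of_nonneg_right (hC θ) (hEpos θ).le
    have ir'E : Integrable (fun θ => r' θ * E θ) := by
      apply Integrable.mono' (iE.const_mul C')
        ((hr'm.mul (by fun_prop : Measurable E)).aestronglyMeasurable)
      refine Eventually.of_forall fun θ => ?_
      rw [Real.norm_eq_abs, Pi.mul_apply, abs_mul, abs_of_pos (hEpos θ)]
      exact mul_le_mul_of_nonneg_right (hC' θ) (hEpos θ).le
    have ixrE : Integrable (fun θ => (θ - m) * r θ * E θ) := by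
      apply Integrable.mono' (ixE.abs.const_mul C)
        (((measurable_id.sub measurable_const).mul hrm |>.mul
          (by fun_prop : Measurable E)).aestronglyMeasurable)
      refine Eventually.of_forall fun θ => ?_
      rw [Real.norm_eq_abs]
      calc |(θ - m) * r θ * E θ| = |r θ| * |(θ - m) * E θ| := by
            rw [abs_mul, abs_mul, abs_mul]; ring
        _ ≤ C * |(θ - m) * E θ| := mul_le_mul_of_nonneg_right (hC θ) (abs_nonneg _)
    -- Stein identities
    have h2b : (2 * b)⁻¹ = t := by rw [hbs]; field_simp
    have hstein : ∫ θ, (θ - m) * r θ * E θ = t * ∫ θ, r' θ * E θ := by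
      have := stein hb m r r' hC hC' hd
      rw [h2b] at this
      exact this
    have hstein1 : ∫ θ, (θ - m) * E θ = 0 := by
      have := stein hb m (fun _ => (1:ℝ)) (fun _ => (0:ℝ)) (C := 1) (C' := 1)
        (fun x => by norm_num) (fun x => by norm_num)
        (fun x => hasDerivAt_const x 1)
      simpa [hEs, neg_mul] using this
    -- moments
    have hA : ∫ θ, θ * r θ * E θ = (∫ θ, (θ - m) * r θ * E θ) + m * ∫ θ, r θ * E θ := by
      rw [← MeasureTheory.integral_const_mul m, ← integral_add ixrE (irE.const_mul m)]
      congr 1; funext θ; ring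
    have hB : ∫ θ, θ * E θ = m * ∫ θ, E θ := by
      have : ∫ θ, θ * E θ = (∫ θ, (θ - m) * E θ) + m * ∫ θ, E θ := by
        rw [← MeasureTheory.integral_const_mul m, ← integral_add ixE (iE.const_mul m)]
        congr 1; funext θ; ring
      rw [this, hstein1, zero_add]
    -- positivity of ∫ E
    have hIE : 0 < ∫ θ, E θ := by
      rw [hEs]
      have hshift := integral_sub_right_eq_self (μ := (volume : Measure ℝ))
        (fun x => Real.exp (-b * x ^ 2)) m
      rw [hshift, integral_gaussian]
      have : 0 < Real.pi / b := by positivity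
      exact Real.sqrt_pos.mpr this
    -- final computation
    simp only [hK1, hK]
    rw [hconv (fun θ => θ * r θ), hconv (fun θ => θ), hconv r, hconv r', hden]
    rw [hA, hB, hstein]
    field_simp
    ring
end

section
/- In the Poisson model with Gamma(\alpha,\beta) prior, the operator K_1 r = K(x r) - (K x)(K r) satisfies K_1 r(y) = \frac{(y+1) f_0(y+1)}{f_0(y)} (K r(y+1) - K r(y)), where K r(y) = E[r(\theta)|Y=y] and f_0 is the marginal negative binomial pmf. -/
open MeasureTheory ProbabilityTheory Real

lemma gammaMeasure_Iic_zero {α β : ℝ} : gammaMeasure α β (Set.Iic 0) = 0 := by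
  rw [gammaMeasure, withDensity_apply _ measurableSet_Iic]
  have h : ∫⁻ x in Set.Iic (0:ℝ), gammaPDF α β x = ∫⁻ x in Set.Iio (0:ℝ), gammaPDF α β x := by
    refine setLIntegral_congr ?_
    exact Iio_ae_eq_Iic.symm
  rw [h, lintegral_gammaPDF_of_nonpos le_rfl]

lemma gammaMeasure_ae_pos {α β : ℝ} : ∀ᵐ x ∂(gammaMeasure α β), 0 < x := by
  have : {x : ℝ | ¬ 0 < x} = Set.Iic 0 := by ext x; simp
  rw [ae_iff, this]
  exact gammaMeasure_Iic_zero

lemma f0_pos {α β : ℝ} (hα : 0 < α) (hβ : 0 < β) (z : ℕ) :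
    0 < ∫ x, Real.exp (-x) * x ^ z / (Nat.factorial z : ℝ) ∂(gammaMeasure α β) := by
  haveI : IsProbabilityMeasure (gammaMeasure α β) := isProbabilityMeasure_gammaMeasure hα hβ
  set p : ℝ → ℝ := fun x => Real.exp (-x) * x ^ z / (Nat.factorial z : ℝ) with hp
  have hmeas : Measurable p := by
    apply Measurable.div _ measurable_const
    exact (measurable_id.neg.exp).mul (measurable_id.pow_const z)
  have hnonneg : 0 ≤ᵐ[gammaMeasure α β] p := by
    filter_upwards [gammaMeasure_ae_pos (α := α) (β := β)] with x hx
    have : (0:ℝ) < Nat.factorial z := by positivity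
    positivity
  have hbound : ∀ᵐ x ∂(gammaMeasure α β), ‖p x‖ ≤ 1 := by
    filter_upwards [gammaMeasure_ae_pos (α := α) (β := β)] with x hx
    have hz : (0:ℝ) < Nat.factorial z := by positivity
    have h1 : x ^ z / (Nat.factorial z : ℝ) ≤ Real.exp x :=
      Real.pow_div_factorial_le_exp x hx.le z
    have h2 : p x = Real.exp (-x) * (x ^ z / (Nat.factorial z : ℝ)) := by
      rw [hp]; ring
    have h3 : p x ≤ Real.exp (-x) * Real.exp x := by
      rw [h2]
      exact mul_le_mul_of_nonneg_left h1 (Real.exp_nonneg _)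
    rw [← Real.exp_add, neg_add_cancel, Real.exp_zero] at h3
    have h4 : 0 ≤ p x := by positivity
    rw [Real.norm_eq_abs, abs_of_nonneg h4]
    exact h3
  have hint : Integrable p (gammaMeasure α β) :=
    Integrable.mono' (integrable_const 1) hmeas.aestronglyMeasurable hbound
  rw [integral_pos_iff_support_of_nonneg_ae hnonneg hint]
  have hsub : Set.Ioi (0:ℝ) ⊆ Function.support p := by
    intro x hx
    simp only [Function.mem_support, hp]
    have hz : (0:ℝ) < Nat.factorial z := by positivity
    have : (0:ℝ) < x := hx
    positivity
  have h1 : gammaMeasure α β (Set.Ioi 0) = 1 := by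
    have := measure_add_measure_compl (μ := gammaMeasure α β) (measurableSet_Iic (a := (0:ℝ)))
    rw [gammaMeasure_Iic_zero, zero_add, measure_univ] at this
    rwa [Set.compl_Iic] at this
  calc (0:ENNReal) < 1 := by norm_num
    _ = gammaMeasure α β (Set.Ioi 0) := h1.symm
    _ ≤ gammaMeasure α β (Function.support p) := measure_mono hsub

/-- In the Poisson model with `Gamma(α,β)` prior, the operator `K₁ r = K(xr) - (Kx)(Kr)`
satisfies `K₁ r(y) = (y+1) f₀(y+1)/f₀(y) · (K r(y+1) - K r(y))`, where
`K r(y) = E[r(θ) | Y = y]` and `f₀` is the marginal negative binomial pmf. -/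
theorem poisson_gamma_K1_formula (α β : ℝ) (hα : 0 < α) (hβ : 0 < β)
    (f0 : ℕ → ℝ)
    (hf0 : ∀ z : ℕ, f0 z = ∫ x, Real.exp (-x) * x ^ z / (Nat.factorial z : ℝ)
        ∂(gammaMeasure α β))
    (K : (ℝ → ℝ) → ℕ → ℝ)
    (hK : ∀ g z, K g z = (∫ x, g x * (Real.exp (-x) * x ^ z / (Nat.factorial z : ℝ))
        ∂(gammaMeasure α β)) / f0 z)
    (K1 : (ℝ → ℝ) → ℕ → ℝ)
    (hK1 : ∀ g z, K1 g z = K (fun x => x * g x) z - K (fun x => x) z * K g z)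
    (r : ℝ → ℝ) (hr : Measurable r) (C : ℝ) (hbd : ∀ x, |r x| ≤ C) (y : ℕ) :
    K1 r y = ((y : ℝ) + 1) * f0 (y + 1) / f0 y * (K r (y + 1) - K r y) := by
  have hy : (0:ℝ) < f0 y := by rw [hf0]; exact f0_pos hα hβ y
  have hy1 : (0:ℝ) < f0 (y + 1) := by rw [hf0]; exact f0_pos hα hβ (y + 1)
  have hfact : ((Nat.factorial (y + 1) : ℝ)) = ((y:ℝ) + 1) * (Nat.factorial y : ℝ) := by
    rw [Nat.factorial_succ]; push_cast; ring
  have hfy : (0:ℝ) < (Nat.factorial y : ℝ) := by positivity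
  -- key pointwise identity
  have hpt : ∀ (g : ℝ → ℝ) (x : ℝ),
      (x * g x) * (Real.exp (-x) * x ^ y / (Nat.factorial y : ℝ))
        = ((y:ℝ) + 1) * (g x * (Real.exp (-x) * x ^ (y + 1) / (Nat.factorial (y + 1) : ℝ))) := by
    intro g x
    rw [hfact, pow_succ]
    field_simp
  have key : ∀ g : ℝ → ℝ,
      (∫ x, (x * g x) * (Real.exp (-x) * x ^ y / (Nat.factorial y : ℝ)) ∂(gammaMeasure α β))
        = ((y:ℝ) + 1) *
          ∫ x, g x * (Real.exp (-x) * x ^ (y + 1) / (Nat.factorial (y + 1) : ℝ))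
            ∂(gammaMeasure α β) := by
    intro g
    rw [← integral_const_mul]
    exact integral_congr_ae (Filter.Eventually.of_forall fun x => hpt g x)
  -- K x formula
  have hint1 : (∫ x, x * (Real.exp (-x) * x ^ y / (Nat.factorial y : ℝ)) ∂(gammaMeasure α β))
      = ((y:ℝ) + 1) * f0 (y + 1) := by
    have := key (fun _ => 1)
    simp only [mul_one, one_mul] at this
    rw [this, hf0]
  have hKx : K (fun x => x) y = ((y:ℝ) + 1) * f0 (y + 1) / f0 y := by
    simp only [hK]
    rw [hint1]
  -- K (x r) formula
  have hintr : (∫ x, r x * (Real.exp (-x) * x ^ (y + 1) / (Nat.factorial (y + 1) : ℝ))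
      ∂(gammaMeasure α β)) = K r (y + 1) * f0 (y + 1) := by
    rw [hK]
    field_simp
  have hKxr : K (fun x => x * r x) y = ((y:ℝ) + 1) * (K r (y + 1) * f0 (y + 1)) / f0 y := by
    simp only [hK]
    rw [key r, hintr, div_mul_cancel₀ _ hy1.ne']
  rw [hK1, hKx, hKxr]
  field_simp
end
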